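/- Fix q ≥ 1 and define T : [0,∞) → ℝ by T(t) = t^{2q} for t ≤ 1 and T(t) = q(2q−1) t² − 4q(q−1) t + (q−1)(2q−1) for t > 1. Then T is twice continuously differentiable on (0,∞) (in particular the values, first derivatives and second derivatives of the two branches match at t = 1), T′(t) > 0 for all t > 0, T is convex, and T″(t)·t − T′(t) equals 4q(q−1) t^{2q−1} for t ≤ 1 and equals 4q(q−1) for t > 1; in particular 0 ≤ T″(t)·t − T′(t) ≤ 2(q−1) T′(t) for all t > 0. -/

import Mathlib

open Set

/-!
Both branches are explicit, so their derivatives are computed directly; the coefficients of the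
quadratic branch are exactly those making its value, slope and curvature at `t = 1` agree with
those of `t ^ (2q)`, which glues `T`, `T′` and `T″` across `t = 1`. Convexity follows from
`T″ ≥ 0`. On `t ≤ 1` the defect `T″·t − T′` equals `2(q−1) T′` exactly, while on `t > 1` it is
the constant `4q(q−1) = 2(q−1) T′(1)`, and `T′` is increasing.
-/

theorem hasDerivAt_ite_le {F : Type*} [NormedAddCommGroup F] [NormedSpace ℝ F]
    {g h g' h' : ℝ → F} {a x : ℝ}
    (hg : x ≤ a → HasDerivAt g (g' x) x) (hh : a ≤ x → HasDerivAt h (h' x) x)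
    (hval : g a = h a) (hder : g' a = h' a) :
    HasDerivAt (fun y => if y ≤ a then g y else h y) (if x ≤ a then g' x else h' x) x := by
  rcases lt_trichotomy x a with hx | rfl | hx
  · rw [if_pos hx.le]
    refine (hg hx.le).congr_of_eventuallyEq ?_
    filter_upwards [Iio_mem_nhds hx] with y hy
    rw [if_pos (le_of_lt hy)]
  · rw [if_pos le_rfl]
    have hleft : HasDerivWithinAt (fun y => if y ≤ x then g y else h y) (g' x) (Iic x) x :=
      (hg le_rfl).hasDerivWithinAt.congr (fun y hy => if_pos hy) (if_pos le_rfl)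
    have hright : HasDerivWithinAt (fun y => if y ≤ x then g y else h y) (g' x) (Ici x) x := by
      refine hder ▸ (hh le_rfl).hasDerivWithinAt.congr (fun y hy => ?_) (by simp [hval])
      split_ifs with hyx
      · rw [le_antisymm hyx hy, hval]
      · rfl
    simpa [Iic_union_Ici] using hleft.union hright
  · rw [if_neg hx.not_ge]
    refine (hh hx.le).congr_of_eventuallyEq ?_
    filter_upwards [Ioi_mem_nhds hx] with y hy
    rw [if_neg (not_le.mpr hy)]

theorem contDiffOn_two_of_hasDerivAt {f f' f'' : ℝ → ℝ} {s : Set ℝ} (hs : IsOpen s)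
    (hf : ∀ x ∈ s, HasDerivAt f (f' x) x) (hf' : ∀ x ∈ s, HasDerivAt f' (f'' x) x)
    (hf'' : ContinuousOn f'' s) : ContDiffOn ℝ 2 f s := by
  have hf'_contDiff : ContDiffOn ℝ 1 f' s := by
    rw [show (1 : WithTop ℕ∞) = 0 + 1 from rfl, contDiffOn_succ_iff_deriv_of_isOpen hs]
    refine ⟨fun x hx => (hf' x hx).differentiableAt.differentiableWithinAt, by simp, ?_⟩
    exact contDiffOn_zero.mpr (hf''.congr fun x hx => (hf' x hx).deriv)
  rw [show (2 : WithTop ℕ∞) = 1 + 1 from rfl, contDiffOn_succ_iff_deriv_of_isOpen hs]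
  exact ⟨fun x hx => (hf x hx).differentiableAt.differentiableWithinAt, by simp,
    hf'_contDiff.congr fun x hx => (hf x hx).deriv⟩

noncomputable section

def truncPow (q t : ℝ) : ℝ :=
  if t ≤ 1 then t ^ (2 * q)
  else q * (2 * q - 1) * t ^ 2 - 4 * q * (q - 1) * t + (q - 1) * (2 * q - 1)

def truncPowDeriv (q t : ℝ) : ℝ :=
  if t ≤ 1 then 2 * q * t ^ (2 * q - 1) else 2 * q * (2 * q - 1) * t - 4 * q * (q - 1)

def truncPowDeriv2 (q t : ℝ) : ℝ :=
  if t ≤ 1 then 2 * q * (2 * q - 1) * t ^ (2 * q - 2) else 2 * q * (2 * q - 1)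

end

section TruncPow

variable {q t : ℝ}

theorem hasDerivAt_truncPow (ht : 0 < t) : HasDerivAt (truncPow q) (truncPowDeriv q t) t := by
  refine hasDerivAt_ite_le (g := fun t => t ^ (2 * q)) (g' := fun t => 2 * q * t ^ (2 * q - 1))
    (h := fun t => q * (2 * q - 1) * t ^ 2 - 4 * q * (q - 1) * t + (q - 1) * (2 * q - 1))
    (h' := fun t => 2 * q * (2 * q - 1) * t - 4 * q * (q - 1))
    (fun _ => Real.hasDerivAt_rpow_const (Or.inl ht.ne')) (fun _ => ?_)
    (by norm_num; ring) (by norm_num; ring)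
  exact ((((hasDerivAt_pow 2 t).const_mul _).sub ((hasDerivAt_id' t).const_mul _)).add_const
    _).congr_deriv (by ring)

theorem hasDerivAt_truncPowDeriv (ht : 0 < t) :
    HasDerivAt (truncPowDeriv q) (truncPowDeriv2 q t) t := by
  refine hasDerivAt_ite_le (g := fun t => 2 * q * t ^ (2 * q - 1))
    (g' := fun t => 2 * q * (2 * q - 1) * t ^ (2 * q - 2))
    (h := fun t => 2 * q * (2 * q - 1) * t - 4 * q * (q - 1))
    (h' := fun _ => 2 * q * (2 * q - 1)) (fun _ => ?_) (fun _ => ?_) (by norm_num; ring)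
    (by norm_num)
  · refine ((Real.hasDerivAt_rpow_const (p := 2 * q - 1) (Or.inl ht.ne')).const_mul
      (2 * q)).congr_deriv ?_
    rw [show 2 * q - 1 - 1 = 2 * q - 2 by ring]
    ring
  · exact (((hasDerivAt_id' t).const_mul _).sub_const _).congr_deriv (by ring)

theorem deriv_truncPow (ht : 0 < t) : deriv (truncPow q) t = truncPowDeriv q t :=
  (hasDerivAt_truncPow ht).deriv

theorem hasDerivAt_deriv_truncPow (ht : 0 < t) :
    HasDerivAt (deriv (truncPow q)) (truncPowDeriv2 q t) t := by
  refine (hasDerivAt_truncPowDeriv ht).congr_of_eventuallyEq ?_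
  filter_upwards [Ioi_mem_nhds ht] with s hs
  exact deriv_truncPow hs

theorem deriv_deriv_truncPow (ht : 0 < t) :
    deriv (deriv (truncPow q)) t = truncPowDeriv2 q t :=
  (hasDerivAt_deriv_truncPow ht).deriv

theorem continuous_truncPowDeriv2 (hq : 1 ≤ q) : Continuous (truncPowDeriv2 q) :=
  Continuous.if_le (continuous_const.mul (Real.continuous_rpow_const (by linarith)))
    continuous_const continuous_id continuous_const (fun t ht => by simp [ht])

theorem contDiffOn_truncPow (hq : 1 ≤ q) : ContDiffOn ℝ 2 (truncPow q) (Ioi 0) :=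
  contDiffOn_two_of_hasDerivAt isOpen_Ioi (fun _ => hasDerivAt_truncPow)
    (fun _ => hasDerivAt_truncPowDeriv) (continuous_truncPowDeriv2 hq).continuousOn

theorem two_mul_le_truncPowDeriv (hq : 1 ≤ q) (ht : 1 < t) : 2 * q ≤ truncPowDeriv q t := by
  rw [truncPowDeriv, if_neg ht.not_ge]
  nlinarith [mul_nonneg (by nlinarith : (0 : ℝ) ≤ 2 * q * (2 * q - 1)) (by linarith : 0 ≤ t - 1)]

theorem truncPowDeriv_pos (hq : 1 ≤ q) (ht : 0 < t) : 0 < truncPowDeriv q t := by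
  by_cases h : t ≤ 1
  · rw [truncPowDeriv, if_pos h]
    have := Real.rpow_pos_of_pos ht (2 * q - 1)
    positivity
  · linarith [two_mul_le_truncPowDeriv hq (not_le.mp h)]

theorem truncPowDeriv2_nonneg (hq : 1 ≤ q) (ht : 0 < t) : 0 ≤ truncPowDeriv2 q t := by
  have hcoeff : 0 ≤ 2 * q * (2 * q - 1) := by nlinarith
  unfold truncPowDeriv2
  split_ifs
  · exact mul_nonneg hcoeff (Real.rpow_nonneg ht.le _)
  · exact hcoeff

theorem convexOn_truncPow (hq : 1 ≤ q) : ConvexOn ℝ (Ioi 0) (truncPow q) := by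
  refine convexOn_of_hasDerivWithinAt2_nonneg (f' := truncPowDeriv q) (f'' := truncPowDeriv2 q)
    (convex_Ioi 0) (contDiffOn_truncPow hq).continuousOn ?_ ?_ ?_ <;> rw [interior_Ioi]
  · exact fun t ht => (hasDerivAt_truncPow ht).hasDerivWithinAt
  · exact fun t ht => (hasDerivAt_truncPowDeriv ht).hasDerivWithinAt
  · exact fun t ht => truncPowDeriv2_nonneg hq ht

theorem truncPowDeriv2_mul_sub_truncPowDeriv (ht : 0 < t) :
    truncPowDeriv2 q t * t - truncPowDeriv q t
      = if t ≤ 1 then 4 * q * (q - 1) * t ^ (2 * q - 1) else 4 * q * (q - 1) := by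
  unfold truncPowDeriv truncPowDeriv2
  split_ifs
  · rw [show 2 * q - 1 = (2 * q - 2) + 1 by ring, Real.rpow_add ht, Real.rpow_one]
    ring
  · ring

theorem truncPowDeriv2_mul_sub_truncPowDeriv_nonneg (hq : 1 ≤ q) (ht : 0 < t) :
    0 ≤ truncPowDeriv2 q t * t - truncPowDeriv q t := by
  have hcoeff : 0 ≤ 4 * q * (q - 1) := by nlinarith
  rw [truncPowDeriv2_mul_sub_truncPowDeriv ht]
  split_ifs
  · exact mul_nonneg hcoeff (Real.rpow_nonneg ht.le _)
  · exact hcoeff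

theorem truncPowDeriv2_mul_sub_truncPowDeriv_le (hq : 1 ≤ q) (ht : 0 < t) :
    truncPowDeriv2 q t * t - truncPowDeriv q t ≤ 2 * (q - 1) * truncPowDeriv q t := by
  rw [truncPowDeriv2_mul_sub_truncPowDeriv ht]
  split_ifs with h
  · rw [truncPowDeriv, if_pos h]
    linarith
  · nlinarith [two_mul_le_truncPowDeriv hq (not_le.mp h)]

end TruncPow

/-- the explicit truncated power function (case `K = 1`): `T(t) = t^{2q}`
for `t ≤ 1` and `T(t) = q(2q−1)t² − 4q(q−1)t + (q−1)(2q−1)` for `t > 1` is `C²` on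
`(0,∞)`, strictly increasing there, convex, with the stated formula and bounds for
`T″(t)·t − T′(t)`. -/
theorem explicit_truncated_power (q : ℝ) (hq : 1 ≤ q) (T : ℝ → ℝ)
    (hT : T = fun t => if t ≤ 1 then t ^ (2 * q)
      else q * (2 * q - 1) * t ^ 2 - 4 * q * (q - 1) * t + (q - 1) * (2 * q - 1)) :
    ContDiffOn ℝ 2 T (Set.Ioi 0) ∧
    (∀ t > (0 : ℝ), 0 < deriv T t) ∧
    ConvexOn ℝ (Set.Ioi 0) T ∧
    (∀ t > (0 : ℝ), deriv (deriv T) t * t - deriv T t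
      = if t ≤ 1 then 4 * q * (q - 1) * t ^ (2 * q - 1) else 4 * q * (q - 1)) ∧
    (∀ t > (0 : ℝ), 0 ≤ deriv (deriv T) t * t - deriv T t ∧
      deriv (deriv T) t * t - deriv T t ≤ 2 * (q - 1) * deriv T t) := by
  obtain rfl : T = truncPow q := hT
  refine ⟨contDiffOn_truncPow hq, fun t ht => ?_, convexOn_truncPow hq, fun t ht => ?_,
    fun t ht => ?_⟩
  · exact deriv_truncPow ht ▸ truncPowDeriv_pos hq ht
  · rw [deriv_deriv_truncPow ht, deriv_truncPow ht]
    exact truncPowDeriv2_mul_sub_truncPowDeriv ht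
  · rw [deriv_deriv_truncPow ht, deriv_truncPow ht]
    exact ⟨truncPowDeriv2_mul_sub_truncPowDeriv_nonneg hq ht,
      truncPowDeriv2_mul_sub_truncPowDeriv_le hq ht⟩
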